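/- Let F be a fixed connected graph with m vertices and m − 1 edges (a tree), and let M_F denote the number of monomorphisms (injective graph homomorphisms) of F into the complete distance graph G = G(n, n/2, n/4). Then M_F ~ N·N_1^{m−1} as n → ∞ over multiples of 4. -/

import Mathlib

open MeasureTheory Filter Asymptotics

/-- Vertices of the complete distance graph `G(n, n/2, n/4)`: 0/1-vectors of length `n`
(encoded as the set of coordinates equal to 1) with exactly `n/2` ones. -/
def DV (n : ℕ) : Type := {s : Finset (Fin n) // s.card = n / 2}

instance (n : ℕ) : Fintype (DV n) := by unfold DV; infer_instance
instance (n : ℕ) : DecidableEq (DV n) := by unfold DV; infer_instance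

/-- The complete distance graph: two vertices are adjacent iff their Euclidean inner
product (= cardinality of the intersection of the corresponding sets) equals `n/4`. -/
def distGraph (n : ℕ) : SimpleGraph (DV n) where
  Adj x y := x ≠ y ∧ (x.1 ∩ y.1).card = n / 4
  symm := ⟨fun x y h => ⟨h.1.symm, by rw [Finset.inter_comm]; exact h.2⟩⟩
  loopless := ⟨fun x h => h.1 rfl⟩

/-- `N = C(n, n/2)`, the number of vertices of the distance graph. -/
def NN (n : ℕ) : ℕ := n.choose (n / 2)

/-- `N₁ = C(n/2, n/4)²`, the common degree of the vertices of the distance graph. -/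
def NN1 (n : ℕ) : ℕ := ((n / 2).choose (n / 4)) ^ 2

/-- Bernoulli measure on `Bool` with parameter `p` (clipped to `[0,1]`). -/
noncomputable def bern (p : ℝ) : Measure Bool :=
  (PMF.bernoulli (min (Real.toNNReal p) 1) (min_le_right _ _)).toMeasure

instance (p : ℝ) : SigmaFinite (bern p) := by unfold bern; infer_instance

/-- The law of the random distance graph `G_p`: each (potential) edge is kept
independently with probability `p`. -/
noncomputable def gpMeasure (n : ℕ) (p : ℝ) : Measure (Sym2 (DV n) → Bool) :=
  Measure.pi fun _ => bern p

/-- The random spanning subgraph of the distance graph determined by the coin flips `ω`. -/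
def randSubgraph (n : ℕ) (ω : Sym2 (DV n) → Bool) : SimpleGraph (DV n) where
  Adj x y := (distGraph n).Adj x y ∧ ω s(x, y) = true
  symm := ⟨fun x y h => ⟨(distGraph n).adj_symm h.1, by rw [Sym2.eq_swap]; exact h.2⟩⟩
  loopless := ⟨fun x h => (distGraph n).irrefl h.1⟩

/-- `G` contains a subgraph isomorphic to `F` (a copy of `F`). -/
def ContainsCopy {α β : Type} (F : SimpleGraph α) (G : SimpleGraph β) : Prop :=
  ∃ f : α → β, Function.Injective f ∧ ∀ ⦃a b⦄, F.Adj a b → G.Adj (f a) (f b)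

/-- `X_F`: the number of subgraphs of `G` isomorphic to `F`. -/
noncomputable def copyCount {α β : Type} (F : SimpleGraph α) (G : SimpleGraph β) : ℕ :=
  Nat.card {H : G.Subgraph // Nonempty (F ≃g H.coe)}

/-- The number of monomorphisms (injective graph homomorphisms) of `F` into `G`. -/
noncomputable def monoCount {α β : Type} (F : SimpleGraph α) (G : SimpleGraph β) : ℕ :=
  Nat.card {f : α → β // Function.Injective f ∧ ∀ ⦃a b⦄, F.Adj a b → G.Adj (f a) (f b)}

/-- Maximal density `ρ^max(F)`: the maximum of `e(H)/v(H)` over nonempty subgraphs `H ⊆ F`. -/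
noncomputable def rhoMax {α : Type} [Fintype α] (F : SimpleGraph α) : ℝ :=
  ⨆ H : {H : F.Subgraph // H.verts.Nonempty},
    (H.1.edgeSet.ncard : ℝ) / (H.1.verts.ncard : ℝ)

/-- `F` is strictly balanced: `e(H)/v(H) < e(F)/v(F)` for every proper nonempty subgraph. -/
def StrictlyBalanced {α : Type} [Fintype α] (F : SimpleGraph α) : Prop :=
  ∀ H : F.Subgraph, H.verts.Nonempty → H ≠ ⊤ →
    H.edgeSet.ncard * Fintype.card α < F.edgeSet.ncard * H.verts.ncard


section AuxProofs

open Finset SimpleGraph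

variable {α β : Type}

private lemma exists_leaf [Fintype α] (F : SimpleGraph α) (hconn : F.Connected)
    (hcard : 2 ≤ Fintype.card α) (hedge : F.edgeSet.ncard = Fintype.card α - 1) :
    ∃ v u, F.Adj v u ∧ ∀ b, F.Adj v b → b = u := by
  classical
  have hdeg : ∀ a : α, 0 < F.degree a := by
    intro a
    rw [F.degree_pos_iff_exists_adj]
    obtain ⟨b, hb⟩ := Fintype.exists_ne_of_one_lt_card (by omega) a
    obtain ⟨w⟩ := hconn a b
    cases w with
    | nil => exact absurd rfl hb
    | cons h _ => exact ⟨_, h⟩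
  have hcnt : F.edgeSet.ncard = F.edgeFinset.card := by
    rw [← Set.ncard_coe_finset, coe_edgeFinset]
  have hsum : ∑ a : α, F.degree a = 2 * (Fintype.card α - 1) := by
    rw [F.sum_degrees_eq_twice_card_edges, ← hcnt, hedge]
  have hv : ∃ v : α, F.degree v ≤ 1 := by
    by_contra h
    push_neg at h
    have : (Finset.univ : Finset α).card • 2 ≤ ∑ a : α, F.degree a :=
      Finset.card_nsmul_le_sum _ _ _ (fun a _ => h a)
    simp only [smul_eq_mul, Finset.card_univ] at this
    omega
  obtain ⟨v, hv1⟩ := hv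
  have hd1 : F.degree v = 1 := le_antisymm hv1 (hdeg v)
  have hcard1 : (F.neighborFinset v).card = 1 := by
    rw [card_neighborFinset_eq_degree, hd1]
  obtain ⟨u, hu⟩ := Finset.card_eq_one.mp hcard1
  refine ⟨v, u, ?_, ?_⟩
  · rw [← mem_neighborFinset, hu]; exact Finset.mem_singleton_self u
  · intro b hb
    have : b ∈ F.neighborFinset v := (mem_neighborFinset _ _ _).mpr hb
    rw [hu] at this
    exact Finset.mem_singleton.mp this

private lemma walk_avoid (F : SimpleGraph α) {v u : α}
    (hleaf : ∀ b, F.Adj v b → b = u) :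
    ∀ (n : ℕ) {a b : α} (w : F.Walk a b), w.length ≤ n → ∀ (ha : a ≠ v) (hb : b ≠ v),
      (F.comap (Subtype.val : {x : α // x ≠ v} → α)).Reachable ⟨a, ha⟩ ⟨b, hb⟩ := by
  intro n
  induction n with
  | zero =>
    intro a b w hw ha hb
    have := SimpleGraph.Walk.eq_of_length_eq_zero (Nat.le_zero.mp hw)
    subst this
    exact SimpleGraph.Reachable.refl _
  | succ n ihn =>
    intro a b w hw ha hb
    cases w with
    | nil => exact SimpleGraph.Reachable.refl _
    | @cons _ c _ h w' =>
      by_cases hc : c = v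
      · cases w' with
        | nil => exact absurd hc hb
        | @cons _ c' _ h2 w'' =>
          have h2' : F.Adj v c' := hc ▸ h2
          have hc' : c' ≠ v := h2'.ne'
          have hau : a = u := hleaf a ((hc ▸ h : F.Adj a v)).symm
          have hcu : c' = u := hleaf c' h2'
          have hac : (⟨a, ha⟩ : {x : α // x ≠ v}) = ⟨c', hc'⟩ :=
            Subtype.ext (show a = c' by rw [hau, hcu])
          rw [hac]
          refine ihn w'' ?_ hc' hb
          simp only [SimpleGraph.Walk.length_cons] at hw
          omega
      · have hadj : (F.comap (Subtype.val : {x : α // x ≠ v} → α)).Adj ⟨a, ha⟩ ⟨c, hc⟩ := h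
        refine hadj.reachable.trans (ihn w' ?_ hc hb)
        simp only [SimpleGraph.Walk.length_cons] at hw
        omega

private lemma card_edge_del [Fintype α] (F : SimpleGraph α)
    {v u : α} (hvu : F.Adj v u) (hleaf : ∀ b, F.Adj v b → b = u) :
    (F.comap (Subtype.val : {x : α // x ≠ v} → α)).edgeSet.ncard + 1 = F.edgeSet.ncard := by
  classical
  set F' := F.comap (Subtype.val : {x : α // x ≠ v} → α) with hF'
  have hc1 : F'.edgeSet.ncard = F'.edgeFinset.card := by
    rw [← Set.ncard_coe_finset, coe_edgeFinset]
  have hc2 : F.edgeSet.ncard = F.edgeFinset.card := by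
    rw [← Set.ncard_coe_finset, coe_edgeFinset]
  rw [hc1, hc2]
  have hmem : s(v, u) ∈ F.edgeFinset := by
    rw [mem_edgeFinset, mem_edgeSet]; exact hvu
  have hbij : F'.edgeFinset.card = (F.edgeFinset.erase s(v, u)).card := by
    refine Finset.card_bij (fun e _ => Sym2.map Subtype.val e) ?_ ?_ ?_
    · intro e he
      induction e using Sym2.ind with
      | _ a b =>
        rw [mem_edgeFinset, mem_edgeSet] at he
        have hab : F.Adj a.1 b.1 := he
        rw [Finset.mem_erase]
        constructor
        · simp only [Sym2.map_pair_eq]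
          intro hcontra
          rw [Sym2.eq_iff] at hcontra
          rcases hcontra with ⟨h1, _⟩ | ⟨_, h2⟩
          · exact a.2 h1
          · exact b.2 h2
        · simp only [Sym2.map_pair_eq, mem_edgeFinset, mem_edgeSet]
          exact hab
    · intro e₁ he₁ e₂ he₂ h
      exact Sym2.map.injective Subtype.val_injective h
    · intro e he
      rw [Finset.mem_erase] at he
      obtain ⟨hne, hmem'⟩ := he
      induction e using Sym2.ind with
      | _ a b =>
        rw [mem_edgeFinset, mem_edgeSet] at hmem'
        have ha : a ≠ v := by
          intro h; subst h
          exact hne (by rw [hleaf b hmem'])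
        have hb : b ≠ v := by
          intro h; subst h
          exact hne (by rw [hleaf a hmem'.symm, Sym2.eq_swap])
        refine ⟨s(⟨a, ha⟩, ⟨b, hb⟩), ?_, by simp [Sym2.map_pair_eq]⟩
        rw [mem_edgeFinset, mem_edgeSet]
        exact hmem'
  rw [hbij, Finset.card_erase_of_mem hmem]
  have : 0 < F.edgeFinset.card := Finset.card_pos.mpr ⟨_, hmem⟩
  omega

private lemma card_subtype_ne [Fintype α] [DecidableEq α] (v : α) :
    Fintype.card {x : α // x ≠ v} = Fintype.card α - 1 := by
  classical
  have h := Fintype.card_subtype_compl (fun x : α => x = v)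
  rw [Fintype.card_subtype_eq] at h
  exact h

private lemma monoCount_step [Fintype α] [Fintype β]
    (F : SimpleGraph α) (G : SimpleGraph β) {v u : α} (hvu : F.Adj v u)
    (hleaf : ∀ b, F.Adj v b → b = u) (d : ℕ)
    (hreg : ∀ w : β, Nat.card {c : β // G.Adj w c} = d) :
    monoCount (F.comap (Subtype.val : {x : α // x ≠ v} → α)) G * (d - (Fintype.card α - 1))
        ≤ monoCount F G ∧
      monoCount F G ≤ monoCount (F.comap (Subtype.val : {x : α // x ≠ v} → α)) G * d := by
  classical
  set F' := F.comap (Subtype.val : {x : α // x ≠ v} → α) with hF'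
  have hu : u ≠ v := hvu.ne'
  set MF' := {g : {x : α // x ≠ v} → β //
      Function.Injective g ∧ ∀ ⦃a b⦄, F'.Adj a b → G.Adj (g a) (g b)} with hMF'
  let P : MF' → β → Prop := fun g c => G.Adj (g.1 ⟨u, hu⟩) c ∧ c ∉ Set.range g.1
  have e : {f : α → β // Function.Injective f ∧ ∀ ⦃a b⦄, F.Adj a b → G.Adj (f a) (f b)} ≃
      {p : MF' × β // P p.1 p.2} := by
    refine ⟨fun f => ⟨(⟨fun x => f.1 x.1, ?_, ?_⟩, f.1 v), ?_, ?_⟩,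
      fun p => ⟨fun a => if h : a = v then p.1.2 else p.1.1.1 ⟨a, h⟩, ?_, ?_⟩, ?_, ?_⟩
    · exact f.2.1.comp Subtype.val_injective
    · exact fun a b h => f.2.2 h
    · exact f.2.2 hvu.symm
    · rintro ⟨⟨x, hx⟩, hfx⟩
      exact hx (f.2.1 hfx)
    · -- injectivity of the extension
      intro a₁ a₂ h
      dsimp only at h
      by_cases h₁ : a₁ = v <;> by_cases h₂ : a₂ = v
      · rw [h₁, h₂]
      · rw [dif_pos h₁, dif_neg h₂] at h
        exact absurd ⟨⟨a₂, h₂⟩, h.symm⟩ p.2.2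
      · rw [dif_neg h₁, dif_pos h₂] at h
        exact absurd ⟨⟨a₁, h₁⟩, h⟩ p.2.2
      · rw [dif_neg h₁, dif_neg h₂] at h
        exact congrArg Subtype.val (p.1.1.2.1 h)
    · -- hom property of the extension
      intro a b hab
      dsimp only
      by_cases h₁ : a = v
      · have hb : b ≠ v := by
          intro hbv; rw [h₁, hbv] at hab; exact hab.ne rfl
        have hbu : b = u := hleaf b (h₁ ▸ hab)
        rw [dif_pos h₁, dif_neg hb]
        have hbe : (⟨b, hb⟩ : {x : α // x ≠ v}) = ⟨u, hu⟩ := Subtype.ext hbu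
        rw [hbe]
        exact p.2.1.symm
      · by_cases h₂ : b = v
        · have hau : a = u := hleaf a (h₂ ▸ hab.symm)
          rw [dif_neg h₁, dif_pos h₂]
          have hae : (⟨a, h₁⟩ : {x : α // x ≠ v}) = ⟨u, hu⟩ := Subtype.ext hau
          rw [hae]
          exact p.2.1
        · rw [dif_neg h₁, dif_neg h₂]
          exact p.1.1.2.2 (show F'.Adj ⟨a, h₁⟩ ⟨b, h₂⟩ from hab)
    · -- left inverse
      intro f
      apply Subtype.ext
      funext a
      dsimp only
      split_ifs with h
      · rw [h]
      · rfl
    · -- right inverse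
      rintro ⟨⟨g, c⟩, hp⟩
      apply Subtype.ext
      apply Prod.ext
      · apply Subtype.ext
        funext x
        exact dif_neg x.2
      · exact dif_pos rfl
  have e2 : {p : MF' × β // P p.1 p.2} ≃ Σ g : MF', {c : β // P g c} :=
    Equiv.subtypeProdEquivSigmaSubtype P
  have hcount : monoCount F G = ∑ g : MF', Nat.card {c : β // P g c} := by
    rw [monoCount, Nat.card_congr (e.trans e2), Nat.card_eq_fintype_card, Fintype.card_sigma]
    simp only [Nat.card_eq_fintype_card]
  have hMF'count : monoCount F' G = Fintype.card MF' := by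
    rw [monoCount, Nat.card_eq_fintype_card]
  -- per-fiber bounds
  have fiber_upper : ∀ g : MF', Nat.card {c : β // P g c} ≤ d := by
    intro g
    rw [← hreg (g.1 ⟨u, hu⟩), Nat.card_eq_fintype_card, Nat.card_eq_fintype_card]
    exact Fintype.card_subtype_mono _ _ fun c hc => hc.1
  have fiber_lower : ∀ g : MF', d - (Fintype.card α - 1) ≤ Nat.card {c : β // P g c} := by
    intro g
    have h1 : Fintype.card {c : β // G.Adj (g.1 ⟨u, hu⟩) c} ≤
        Fintype.card {c : β // P g c} + (Set.range g.1).toFinset.card := by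
      rw [Fintype.card_subtype, Fintype.card_subtype]
      refine le_trans (Finset.card_le_card ?_) (Finset.card_union_le _ _)
      intro c hc
      simp only [Finset.mem_filter, Finset.mem_univ, true_and, Finset.mem_union,
        Set.mem_toFinset] at hc ⊢
      by_cases hr : c ∈ Set.range g.1
      · exact Or.inr hr
      · exact Or.inl ⟨hc, hr⟩
    have h2 : (Set.range g.1).toFinset.card = Fintype.card α - 1 := by
      rw [Set.toFinset_card, ← Nat.card_eq_fintype_card, Nat.card_range_of_injective g.2.1,
        Nat.card_eq_fintype_card, card_subtype_ne]
    have h3 : Fintype.card {c : β // G.Adj (g.1 ⟨u, hu⟩) c} = d :=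
      (Nat.card_eq_fintype_card).symm.trans (hreg _)
    rw [Nat.card_eq_fintype_card]
    omega
  constructor
  · rw [hcount, hMF'count]
    calc Fintype.card MF' * (d - (Fintype.card α - 1))
        = (Finset.univ : Finset MF').card • (d - (Fintype.card α - 1)) := by
          simp [Finset.card_univ]
      _ ≤ ∑ g : MF', Nat.card {c : β // P g c} :=
          Finset.card_nsmul_le_sum _ _ _ fun g _ => fiber_lower g
  · rw [hcount, hMF'count]
    calc ∑ g : MF', Nat.card {c : β // P g c}
        ≤ (Finset.univ : Finset MF').card • d :=
          Finset.sum_le_card_nsmul _ _ _ fun g _ => fiber_upper g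
      _ = Fintype.card MF' * d := by simp [Finset.card_univ]

lemma card_DV (n : ℕ) : Nat.card (DV n) = NN n := by
  classical
  have e : DV n ≃ {A : Finset (Fin n) // A ∈ Finset.powersetCard (n / 2) (univ : Finset (Fin n))} := by
    refine ⟨fun s => ⟨s.1, ?_⟩, fun A => ⟨A.1, ?_⟩, fun s => rfl, fun A => rfl⟩
    · rw [mem_powersetCard]; exact ⟨subset_univ _, s.2⟩
    · have := A.2; rw [mem_powersetCard] at this; exact this.2
  rw [Nat.card_congr e, Nat.card_eq_fintype_card, Fintype.card_coe,
    card_powersetCard, card_univ, Fintype.card_fin, NN]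

lemma distGraph_regular (t : ℕ) (ht : 1 ≤ t) (x : DV (4 * t)) :
    Nat.card {y : DV (4 * t) // (distGraph (4 * t)).Adj x y} = NN1 (4 * t) := by
  classical
  have h2 : (4 * t) / 2 = 2 * t := by omega
  have h4 : (4 * t) / 4 = t := by omega
  have hx : x.1.card = 2 * t := by rw [x.2, h2]
  set S := powersetCard t x.1 ×ˢ powersetCard t (x.1ᶜ : Finset (Fin (4 * t))) with hS
  have hxc : (x.1ᶜ : Finset (Fin (4 * t))).card = 2 * t := by
    rw [card_compl, hx, Fintype.card_fin]; omega
  -- facts about members of S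
  have hmem : ∀ p : Finset (Fin (4 * t)) × Finset (Fin (4 * t)), p ∈ S →
      p.1 ⊆ x.1 ∧ p.1.card = t ∧ p.2 ⊆ x.1ᶜ ∧ p.2.card = t := by
    intro p hp
    rw [hS, mem_product, mem_powersetCard, mem_powersetCard] at hp
    exact ⟨hp.1.1, hp.1.2, hp.2.1, hp.2.2⟩
  have hxB : ∀ p, p ∈ S → x.1 ∩ p.2 = ∅ := by
    intro p hp
    rw [← disjoint_iff_inter_eq_empty]
    exact disjoint_compl_right.mono_right (hmem p hp).2.2.1
  have hint : ∀ p, p ∈ S → x.1 ∩ (p.1 ∪ p.2) = p.1 := by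
    intro p hp
    rw [inter_union_distrib_left, inter_eq_right.mpr (hmem p hp).1, hxB p hp, union_empty]
  have hU : ∀ p, p ∈ S → (p.1 ∪ p.2).card = (4 * t) / 2 := by
    intro p hp
    obtain ⟨h1, h2', h3, h4'⟩ := hmem p hp
    have hdisj : Disjoint p.1 p.2 := disjoint_compl_right.mono h1 h3
    rw [card_union_of_disjoint hdisj, h2', h4']; omega
  have hAdj : ∀ p, (hp : p ∈ S) → (distGraph (4 * t)).Adj x ⟨p.1 ∪ p.2, hU p hp⟩ := by
    intro p hp
    obtain ⟨h1, h2', h3, h4'⟩ := hmem p hp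
    refine ⟨?_, ?_⟩
    · intro h
      have hval : x.1 = p.1 ∪ p.2 := congrArg Subtype.val h
      have hBsub : p.2 ⊆ x.1 := hval ▸ subset_union_right
      have hBempty : p.2 ⊆ x.1 ∩ x.1ᶜ := subset_inter hBsub h3
      rw [inter_compl] at hBempty
      have := card_le_card hBempty
      rw [card_empty, h4'] at this
      omega
    · show (x.1 ∩ (p.1 ∪ p.2)).card = (4 * t) / 4
      rw [hint p hp, h2', h4]
  have hsd : ∀ p, p ∈ S → (p.1 ∪ p.2) \ x.1 = p.2 := by
    intro p hp
    obtain ⟨h1, h2', h3, h4'⟩ := hmem p hp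
    rw [union_sdiff_distrib, sdiff_eq_empty_iff_subset.mpr h1, empty_union]
    exact sdiff_eq_self_iff_disjoint.mpr (disjoint_compl_right.mono_right h3).symm
  have e : {y : DV (4 * t) // (distGraph (4 * t)).Adj x y} ≃ {p // p ∈ S} := by
    refine ⟨fun y => ⟨(x.1 ∩ y.1.1, y.1.1 \ x.1), ?_⟩,
      fun p => ⟨⟨p.1.1 ∪ p.1.2, hU p.1 p.2⟩, hAdj p.1 p.2⟩, ?_, ?_⟩
    · rw [hS, mem_product, mem_powersetCard, mem_powersetCard]
      obtain ⟨hne, hintxy⟩ : x ≠ y.1 ∧ (x.1 ∩ y.1.1).card = (4 * t) / 4 := y.2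
      refine ⟨⟨inter_subset_left, by rw [hintxy, h4]⟩, ?_, ?_⟩
      · intro a ha
        exact mem_compl.mpr (mem_sdiff.mp ha).2
      · show (y.1.1 \ x.1).card = t
        have hy : y.1.1.card = 2 * t := by rw [y.1.2, h2]
        have hsum := card_sdiff_add_card_inter y.1.1 x.1
        rw [hy, inter_comm, hintxy, h4] at hsum
        omega
    · intro y
      apply Subtype.ext
      apply Subtype.ext
      show x.1 ∩ y.1.1 ∪ y.1.1 \ x.1 = y.1.1
      rw [inter_comm, union_comm]
      exact sdiff_union_inter y.1.1 x.1
    · intro p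
      apply Subtype.ext
      show (x.1 ∩ (p.1.1 ∪ p.1.2), (p.1.1 ∪ p.1.2) \ x.1) = p.1
      rw [hint p.1 p.2, hsd p.1 p.2]
  rw [Nat.card_congr e, Nat.card_eq_fintype_card, Fintype.card_coe, hS, card_product,
    card_powersetCard, card_powersetCard, hx, hxc, NN1, h2, h4, sq]

private lemma mono_bounds : ∀ (m : ℕ) {α β : Type} [Fintype α] [Fintype β]
    (F : SimpleGraph α) (G : SimpleGraph β) (d : ℕ),
    (∀ w : β, Nat.card {c : β // G.Adj w c} = d) →
    Fintype.card α = m → F.Connected → F.edgeSet.ncard = m - 1 →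
    Nat.card β * (d - (m - 1)) ^ (m - 1) ≤ monoCount F G ∧
      monoCount F G ≤ Nat.card β * d ^ (m - 1) := by
  intro m
  induction m using Nat.strong_induction_on with
  | _ m ih =>
    intro α β _ _ F G d hreg hm hconn hedge
    classical
    rcases Nat.lt_or_ge m 2 with hm2 | hm2
    · have hne : Nonempty α := hconn.nonempty
      have hm1 : m = 1 := by
        have := Fintype.card_pos_iff.mpr hne; omega
      subst hm1
      have eα : α ≃ Fin 1 := Fintype.equivFinOfCardEq hm
      have hsub : Subsingleton α := Fintype.card_le_one_iff_subsingleton.mp (le_of_eq hm)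
      have he : {f : α → β // Function.Injective f ∧
          ∀ ⦃a b⦄, F.Adj a b → G.Adj (f a) (f b)} ≃ β := by
        refine (Equiv.subtypeUnivEquiv ?_).trans
          ((Equiv.arrowCongr eα (Equiv.refl β)).trans (Equiv.funUnique (Fin 1) β))
        intro f
        constructor
        · intro a b _; exact Subsingleton.elim a b
        · intro a b hab; exact absurd (Subsingleton.elim a b) hab.ne
      have hmc : monoCount F G = Nat.card β := by rw [monoCount, Nat.card_congr he]
      simp [hmc]
    · obtain ⟨v, u, hvu, hleaf⟩ := exists_leaf F hconn (by omega) (by rw [hm, hedge])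
      have hu : u ≠ v := hvu.ne'
      set F' := F.comap (Subtype.val : {x : α // x ≠ v} → α) with hF'
      have hcard' : Fintype.card {x : α // x ≠ v} = m - 1 := by
        rw [card_subtype_ne, hm]
      have hconn' : F'.Connected := by
        have hne' : Nonempty {x : α // x ≠ v} := ⟨⟨u, hu⟩⟩
        apply SimpleGraph.Connected.mk
        intro a b
        obtain ⟨w⟩ := hconn a.1 b.1
        have h := walk_avoid F hleaf w.length w le_rfl a.2 b.2
        exact h
      have hedge' : F'.edgeSet.ncard = (m - 1) - 1 := by
        have h : F'.edgeSet.ncard + 1 = F.edgeSet.ncard := card_edge_del F hvu hleaf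
        rw [hedge] at h
        omega
      have step := monoCount_step F G hvu hleaf d hreg
      rw [hm] at step
      have IH := ih (m - 1) (by omega) F' G d hreg hcard' hconn' hedge'
      have hmm : m - 1 - 1 = m - 2 := by omega
      rw [hmm] at IH
      constructor
      · calc Nat.card β * (d - (m - 1)) ^ (m - 1)
            = Nat.card β * (d - (m - 1)) ^ (m - 2) * (d - (m - 1)) := by
              rw [mul_assoc, ← pow_succ]
              congr 2
              omega
          _ ≤ Nat.card β * (d - (m - 2)) ^ (m - 2) * (d - (m - 1)) := by
              have : d - (m - 1) ≤ d - (m - 2) := Nat.sub_le_sub_left (by omega) d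
              exact Nat.mul_le_mul_right _ (Nat.mul_le_mul_left _ (Nat.pow_le_pow_left this _))
          _ ≤ monoCount F' G * (d - (m - 1)) := Nat.mul_le_mul_right _ IH.1
          _ ≤ monoCount F G := step.1
      · calc monoCount F G ≤ monoCount F' G * d := step.2
          _ ≤ (Nat.card β * d ^ (m - 2)) * d := Nat.mul_le_mul_right _ IH.2
          _ = Nat.card β * d ^ (m - 1) := by
              rw [mul_assoc, ← pow_succ]
              congr 2
              omega

end AuxProofs

/-- For a fixed tree `F` with `m` vertices (connected, `m − 1`
edges), the number of monomorphisms of `F` into the complete distance graph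
satisfies `M_F ~ N·N₁^{m−1}`. -/
theorem stmt18 {α : Type} [Fintype α] (F : SimpleGraph α) (m : ℕ)
    (hm : Fintype.card α = m) (hconn : F.Connected) (hedge : F.edgeSet.ncard = m - 1) :
    Tendsto (fun t => (monoCount F (distGraph (4 * t)) : ℝ) /
        ((NN (4 * t) : ℝ) * (NN1 (4 * t) : ℝ) ^ (m - 1)))
      atTop (nhds 1) := by
  classical
  set k := m - 1 with hk
  have hbounds : ∀ t : ℕ, 1 ≤ t →
      NN (4 * t) * (NN1 (4 * t) - k) ^ k ≤ monoCount F (distGraph (4 * t)) ∧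
        monoCount F (distGraph (4 * t)) ≤ NN (4 * t) * NN1 (4 * t) ^ k := by
    intro t ht
    have h := mono_bounds m F (distGraph (4 * t)) (NN1 (4 * t))
      (fun w => distGraph_regular t ht w) hm hconn hedge
    rwa [card_DV] at h
  have hNNpos : ∀ n : ℕ, 0 < NN n := fun n => Nat.choose_pos (Nat.div_le_self n 2)
  have hNN1pos : ∀ n : ℕ, 0 < NN1 n := fun n => pow_pos (Nat.choose_pos (by omega)) 2
  have hNN1inf : Tendsto (fun t => NN1 (4 * t)) atTop atTop := by
    apply tendsto_atTop_mono' atTop ?_ tendsto_id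
    filter_upwards [eventually_ge_atTop 1] with t ht
    have h2 : (4 * t) / 2 = 2 * t := by omega
    have h4 : (4 * t) / 4 = t := by omega
    have hc1 : 2 * t ≤ (2 * t).choose t := by
      have h := Nat.choose_le_middle 1 (2 * t)
      rw [Nat.choose_one_right] at h
      have : (2 * t) / 2 = t := by omega
      rwa [this] at h
    have hc2 : (2 * t).choose t ≤ ((2 * t).choose t) ^ 2 :=
      Nat.le_self_pow two_ne_zero _
    show t ≤ NN1 (4 * t)
    rw [NN1, h2, h4]
    omega
  have hD : Tendsto (fun t => (NN1 (4 * t) : ℝ)) atTop atTop :=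
    tendsto_natCast_atTop_atTop.comp hNN1inf
  set L : ℕ → ℝ := fun t => ((NN1 (4 * t) - k : ℕ) : ℝ) ^ k / ((NN1 (4 * t) : ℝ)) ^ k
    with hL'
  have hL : Tendsto L atTop (nhds 1) := by
    have h0 : Tendsto (fun t => (k : ℝ) / (NN1 (4 * t) : ℝ)) atTop (nhds 0) :=
      tendsto_const_nhds.div_atTop hD
    have h1 : Tendsto (fun t => 1 - (k : ℝ) / (NN1 (4 * t) : ℝ)) atTop (nhds 1) := by
      simpa using tendsto_const_nhds.sub h0
    have h2 : Tendsto (fun t => (1 - (k : ℝ) / (NN1 (4 * t) : ℝ)) ^ k) atTop (nhds 1) := by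
      simpa using h1.pow k
    refine Tendsto.congr' ?_ h2
    filter_upwards [hD.eventually_ge_atTop (k : ℝ)] with t htk
    have hk' : k ≤ NN1 (4 * t) := by exact_mod_cast htk
    have hpos : (0 : ℝ) < (NN1 (4 * t) : ℝ) := by exact_mod_cast hNN1pos (4 * t)
    rw [hL']
    dsimp only
    rw [Nat.cast_sub hk', ← div_pow, sub_div, div_self (ne_of_gt hpos)]
  refine tendsto_of_tendsto_of_tendsto_of_le_of_le' hL tendsto_const_nhds ?_ ?_
  · filter_upwards [eventually_ge_atTop 1] with t ht
    have hb := (hbounds t ht).1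
    have hNr : (0 : ℝ) < (NN (4 * t) : ℝ) := by exact_mod_cast hNNpos (4 * t)
    have hDr : (0 : ℝ) < (NN1 (4 * t) : ℝ) := by exact_mod_cast hNN1pos (4 * t)
    have hdenom : (0 : ℝ) < (NN (4 * t) : ℝ) * (NN1 (4 * t) : ℝ) ^ k :=
      mul_pos hNr (pow_pos hDr k)
    have hcast : (NN (4 * t) : ℝ) * ((NN1 (4 * t) - k : ℕ) : ℝ) ^ k ≤
        (monoCount F (distGraph (4 * t)) : ℝ) := by exact_mod_cast hb
    rw [hL', div_le_div_iff₀ (pow_pos hDr k) hdenom]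
    calc ((NN1 (4 * t) - k : ℕ) : ℝ) ^ k * ((NN (4 * t) : ℝ) * (NN1 (4 * t) : ℝ) ^ k)
        = ((NN (4 * t) : ℝ) * ((NN1 (4 * t) - k : ℕ) : ℝ) ^ k) * (NN1 (4 * t) : ℝ) ^ k := by
          ring
      _ ≤ (monoCount F (distGraph (4 * t)) : ℝ) * (NN1 (4 * t) : ℝ) ^ k :=
          mul_le_mul_of_nonneg_right hcast (by positivity)
  · filter_upwards [eventually_ge_atTop 1] with t ht
    have hb := (hbounds t ht).2
    have hNr : (0 : ℝ) < (NN (4 * t) : ℝ) := by exact_mod_cast hNNpos (4 * t)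
    have hDr : (0 : ℝ) < (NN1 (4 * t) : ℝ) := by exact_mod_cast hNN1pos (4 * t)
    rw [div_le_one (mul_pos hNr (pow_pos hDr k))]
    exact_mod_cast hb
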